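/- arXiv:2307.15415 — 3 statements merged into one kernel-verified Lean document; each statement's English description precedes it below -/
import Mathlib

section
/- Let α > −1, n ≥ 1, and set λ_n^L = m(n)/m(n−1). The polynomial y(x) = ∑_{p=0}^n (a_p/m(p)) x^p, where a_0 = 1, a_1 = −λ_n^L/(α+1), and for 2 ≤ p ≤ n, a_p = −(m(p) λ_n^L)/(m(1)(α+1)) · ∏_{j=1}^{p−1} ( (m(j)/m(j−1) − λ_n^L) / ( (m(j+1)/m(j)) (m(j)/m(j−1) + α + 1) ) ), satisfies the moment differential equation x ∂_m² y + (α+1−x) ∂_m y + λ_n^L y = 0. -/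
open PowerSeries Finset

/-!
In the basis `x^p / m(p)` the moment derivative is the backward shift. Hence for
`y = ∑ (a_p / m(p)) x^p` the equation reduces, coefficient by coefficient, to
`(α + 1) a_1 + λ a_0 = 0` and the recurrence `a_{p+1} (λ_p + α + 1) = a_p (λ_p - λ)`, where
`λ_p = m(p)/m(p-1)` and `λ = λ_n`. The product formula for `a_p` solves this recurrence, and
truncating at `n` is consistent with it because `λ_n - λ = 0`.
-/

/-- The moment derivative associated to a sequence `m`. -/
noncomputable def mderiv (m : ℕ → ℝ) (f : PowerSeries ℂ) : PowerSeries ℂ :=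
  PowerSeries.mk fun p => ((m (p + 1) / m p : ℝ) : ℂ) * PowerSeries.coeff (R := ℂ) (p + 1) f

noncomputable def momentLaguerreOp (m : ℕ → ℝ) (c L : ℂ) (y : PowerSeries ℂ) :
    PowerSeries ℂ :=
  X * mderiv m (mderiv m y) + (C c - X) * mderiv m y + C L * y

section

variable {m : ℕ → ℝ} (hm : ∀ p, m p ≠ 0)
include hm

theorem mderiv_mk_div (a : ℕ → ℂ) :
    mderiv m (PowerSeries.mk fun p => a p / m p) = PowerSeries.mk fun p => a (p + 1) / m p := by
  ext p
  have : (m (p + 1) : ℂ) ≠ 0 := by exact_mod_cast hm (p + 1)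
  simp only [mderiv, coeff_mk]
  push_cast
  field_simp

theorem coeff_zero_momentLaguerreOp (c L : ℂ) (a : ℕ → ℂ) :
    coeff 0 (momentLaguerreOp m c L (PowerSeries.mk fun p => a p / m p))
      = (c * a 1 + L * a 0) / m 0 := by
  simp only [momentLaguerreOp, mderiv_mk_div hm, map_add, sub_mul, map_sub, coeff_zero_X_mul,
    coeff_C_mul, coeff_mk]
  ring

theorem coeff_succ_momentLaguerreOp (c L : ℂ) (a : ℕ → ℂ) (q : ℕ) :
    coeff (q + 1) (momentLaguerreOp m c L (PowerSeries.mk fun p => a p / m p))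
      = (a (q + 2) * ((m (q + 1) / m q : ℝ) + c)
          - a (q + 1) * ((m (q + 1) / m q : ℝ) - L)) / m (q + 1) := by
  simp only [momentLaguerreOp, mderiv_mk_div hm, map_add, sub_mul, map_sub, coeff_succ_X_mul,
    coeff_C_mul, coeff_mk]
  have : (m (q + 1) : ℂ) ≠ 0 := by exact_mod_cast hm (q + 1)
  push_cast
  field_simp
  ring

theorem momentLaguerreOp_mk_div_eq_zero {c L : ℂ} {a : ℕ → ℂ}
    (h0 : c * a 1 + L * a 0 = 0)
    (hsucc : ∀ q, a (q + 2) * ((m (q + 1) / m q : ℝ) + c)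
      = a (q + 1) * ((m (q + 1) / m q : ℝ) - L)) :
    momentLaguerreOp m c L (PowerSeries.mk fun p => a p / m p) = 0 := by
  ext (_ | q)
  · rw [coeff_zero_momentLaguerreOp hm, h0, zero_div, map_zero]
  · rw [coeff_succ_momentLaguerreOp hm, hsucc, sub_self, zero_div, map_zero]

end

theorem Finset.mul_eq_mul_of_eq_mul_prod_Icc {M : Type*} [CommMonoid M] {n : ℕ} {a g r : ℕ → M}
    (h : ∀ p, 1 ≤ p → p ≤ n → a p = g p * ∏ j ∈ Icc 1 (p - 1), r j) {p : ℕ} (hp : 1 ≤ p)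
    (hpn : p + 1 ≤ n) :
    a (p + 1) * g p = a p * g (p + 1) * r p := by
  obtain ⟨k, rfl⟩ := Nat.exists_eq_add_of_le' hp
  rw [h _ le_add_self hpn, h _ hp (by omega), Nat.add_sub_cancel, Nat.add_sub_cancel,
    prod_Icc_succ_top (by omega)]
  ac_rfl

theorem laguerreCoeff_recurrence {m : ℕ → ℝ} (hm : ∀ p, 0 < m p) {α L : ℝ} (hα : -1 < α)
    (hL : L ≠ 0) {n : ℕ} {a : ℕ → ℝ} (ha1 : a 1 = -L / (α + 1))
    (hap : ∀ p, 2 ≤ p → p ≤ n → a p = -(m p * L) / (m 1 * (α + 1)) *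
      ∏ j ∈ Icc 1 (p - 1),
        ((m j / m (j - 1) - L) / ((m (j + 1) / m j) * (m j / m (j - 1) + α + 1))))
    {q : ℕ} (hq : q + 2 ≤ n) :
    a (q + 2) * (m (q + 1) / m q + α + 1) = a (q + 1) * (m (q + 1) / m q - L) := by
  have hprod : ∀ p, 1 ≤ p → p ≤ n → a p = -(m p * L) / (m 1 * (α + 1)) *
      ∏ j ∈ Icc 1 (p - 1),
        ((m j / m (j - 1) - L) / ((m (j + 1) / m j) * (m j / m (j - 1) + α + 1))) := by
    intro p hp hpn
    rcases hp.eq_or_lt with rfl | hp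
    · rw [ha1, Nat.sub_self, Icc_eq_empty_of_lt zero_lt_one, prod_empty, mul_one,
        neg_div, neg_div, mul_div_mul_left _ _ (hm 1).ne']
    · exact hap p hp hpn
  have hrec := mul_eq_mul_of_eq_mul_prod_Icc hprod (Nat.le_add_left 1 q) hq
  simp only [Nat.add_sub_cancel] at hrec
  have hmq := (hm q).ne'
  have hmq2 := (hm (q + 2)).ne'
  have hd : 0 < m (q + 1) / m q + α + 1 := by
    have := div_pos (hm (q + 1)) (hm q); linarith
  have hg : -(m (q + 1) * L) / (m 1 * (α + 1)) ≠ 0 :=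
    div_ne_zero (neg_ne_zero.mpr (mul_ne_zero (hm (q + 1)).ne' hL))
      (mul_ne_zero (hm 1).ne' (by linarith))
  have hratio : a (q + 2) = a (q + 1) * ((m (q + 1) / m q - L) / (m (q + 1) / m q + α + 1)) := by
    refine mul_right_cancel₀ hg (hrec.trans ?_)
    field_simp
  rw [hratio, mul_assoc, div_mul_cancel₀ _ hd.ne']

theorem stmt3_general (m : ℕ → ℝ) (hm : ∀ p, 0 < m p)
    (α : ℝ) (hα : -1 < α) (n : ℕ) (hn : 1 ≤ n)
    (a : ℕ → ℝ) (ha0 : a 0 = 1)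
    (ha1 : a 1 = -(m n / m (n - 1)) / (α + 1))
    (hap : ∀ p, 2 ≤ p → p ≤ n → a p =
      -(m p * (m n / m (n - 1))) / (m 1 * (α + 1)) *
        ∏ j ∈ Finset.Icc 1 (p - 1),
          ((m j / m (j - 1) - m n / m (n - 1)) /
            ((m (j + 1) / m j) * (m j / m (j - 1) + α + 1))))
    (y : PowerSeries ℂ)
    (hy : y = PowerSeries.mk fun p => if p ≤ n then ((a p / m p : ℝ) : ℂ) else 0) :
    (X : PowerSeries ℂ) * mderiv m (mderiv m y)
      + (C (R := ℂ) ((α : ℂ) + 1) - X) * mderiv m y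
      + C (R := ℂ) ((m n / m (n - 1) : ℝ) : ℂ) * y = 0 := by
  set L := m n / m (n - 1) with hL
  have hL0 : 0 < L := div_pos (hm n) (hm (n - 1))
  set A : ℕ → ℂ := fun p => if p ≤ n then (a p : ℂ) else 0
  have hyA : y = PowerSeries.mk fun p => A p / m p := by
    rw [hy]; ext p; simp only [coeff_mk, A]; split_ifs <;> push_cast <;> simp
  change momentLaguerreOp m ((α : ℂ) + 1) L y = 0
  rw [hyA]
  refine momentLaguerreOp_mk_div_eq_zero (fun p => (hm p).ne') ?_ fun q => ?_
  · simp only [A, if_pos hn, if_pos (Nat.zero_le n), ha0, ha1]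
    have : (α : ℂ) + 1 ≠ 0 := by exact_mod_cast (show α + 1 ≠ 0 by linarith)
    push_cast
    field_simp
    ring
  · rcases lt_or_ge n (q + 2) with hq | hq
    · rcases (Nat.lt_succ_iff.mp hq).eq_or_lt with hnq | hnq
      · simp [A, hnq, hL]
      · simp [A, show ¬ q + 2 ≤ n by omega, show ¬ q + 1 ≤ n by omega]
    · simp only [A, if_pos hq, if_pos (show q + 1 ≤ n by omega)]
      rw [← add_assoc]
      exact_mod_cast laguerreCoeff_recurrence hm hα hL0.ne' ha1 hap hq

/-- The generalized Laguerre polynomial solves the moment differential equation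
`x ∂_m² y + (α+1-x) ∂_m y + λ_n^L y = 0`, with `λ_n^L = m(n)/m(n-1)`. -/
theorem stmt3 (m : ℕ → ℝ) (hm : ∀ p, 0 < m p) (hm0 : m 0 = 1)
    (α : ℝ) (hα : -1 < α) (n : ℕ) (hn : 1 ≤ n)
    (a : ℕ → ℝ) (ha0 : a 0 = 1)
    (ha1 : a 1 = -(m n / m (n - 1)) / (α + 1))
    (hap : ∀ p, 2 ≤ p → p ≤ n → a p =
      -(m p * (m n / m (n - 1))) / (m 1 * (α + 1)) *
        ∏ j ∈ Finset.Icc 1 (p - 1),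
          ((m j / m (j - 1) - m n / m (n - 1)) /
            ((m (j + 1) / m j) * (m j / m (j - 1) + α + 1))))
    (y : PowerSeries ℂ)
    (hy : y = PowerSeries.mk fun p => if p ≤ n then ((a p / m p : ℝ) : ℂ) else 0) :
    (X : PowerSeries ℂ) * mderiv m (mderiv m y)
      + (C (R := ℂ) ((α : ℂ) + 1) - X) * mderiv m y
      + C (R := ℂ) ((m n / m (n - 1) : ℝ) : ℂ) * y = 0 :=
  stmt3_general m hm α hα n hn a ha0 ha1 hap y hy
end

section
/- Let n ≥ 2 be even and λ_n^H = 2m(n)/m(n−1). Then the polynomial y(x) = ∑_{k=0}^{n/2} (a_{2k}/m(2k)) x^{2k}, with a_0 = 1, a_2 = −λ_n^H, and a_{2k} = −(m(2k) λ_n^H / m(2)) ∏_{j=1}^{k−1} ( m(2j)(2m(2j)/m(2j−1) − λ_n^H) / m(2j+2) ) for k ≥ 2, is an even polynomial of degree exactly n solving ∂_m² y − 2x ∂_m y + λ_n^H y = 0. -/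
/-!
Write a power series as `∑ c p / m p • x ^ p`. In these normalized coefficients `∂_m` is the
shift `c ↦ c (· + 1)`, so the equation `∂_m² y - 2x ∂_m y + λ y = 0` becomes the two-term
recurrence `c (p + 2) = (2 m p / m (p - 1) - λ) c p` (with `c 2 = -λ c 0`). The product
formula for `a_{2k}` telescopes to `a_{2k} = -λ ∏_{1 ≤ j < k} (2 m(2j)/m(2j-1) - λ)`, which
satisfies this recurrence; the factor `2 m n / m (n - 1) - λ` vanishes at `p = n`, so
truncating at degree `n` keeps a solution, and the non-resonance hypothesis makes the top
coefficient nonzero.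
-/

open PowerSeries Finset

theorem prod_Icc_mul_div_succ {K : Type*} [Field K] {g : ℕ → K} (hg : ∀ j, g j ≠ 0)
    (x : ℕ → K) (k : ℕ) :
    ∏ j ∈ Icc 1 k, (g j * x j / g (j + 1)) = g 1 / g (k + 1) * ∏ j ∈ Icc 1 k, x j := by
  induction k with
  | zero => simp [hg 1]
  | succ k ih =>
    rw [prod_Icc_succ_top (by omega), prod_Icc_succ_top (by omega), ih]
    field_simp [hg (k + 1), hg (k + 2)]

noncomputable def ofMoments (m c : ℕ → ℝ) : PowerSeries ℂ :=
  PowerSeries.mk fun p => ((c p / m p : ℝ) : ℂ)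

section

variable {m : ℕ → ℝ}

theorem coeff_ofMoments (c : ℕ → ℝ) (p : ℕ) :
    coeff p (ofMoments m c) = ((c p / m p : ℝ) : ℂ) :=
  coeff_mk _ _

theorem mderiv_ofMoments (hm : ∀ p, m p ≠ 0) (c : ℕ → ℝ) :
    mderiv m (ofMoments m c) = ofMoments m fun p => c (p + 1) := by
  ext p
  rw [mderiv, coeff_mk, coeff_ofMoments, coeff_ofMoments, ← Complex.ofReal_mul]
  congr 1
  field_simp [hm (p + 1)]

theorem hermiteOp_ofMoments_eq_zero (hm : ∀ p, m p ≠ 0) {c : ℕ → ℝ} {L : ℝ}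
    (h0 : c 2 = -L * c 0) (hrec : ∀ p, c (p + 3) = (2 * m (p + 1) / m p - L) * c (p + 1)) :
    mderiv m (mderiv m (ofMoments m c)) - 2 * X * mderiv m (ofMoments m c)
      + C (L : ℂ) * ofMoments m c = 0 := by
  rw [mderiv_ofMoments hm, mderiv_ofMoments hm, mul_assoc, ← map_ofNat C 2]
  ext (_ | p)
  · simp only [map_add, map_sub, coeff_C_mul, coeff_zero_X_mul, coeff_ofMoments, map_zero]
    rw [h0]
    push_cast
    ring
  · simp only [map_add, map_sub, coeff_C_mul, coeff_succ_X_mul, coeff_ofMoments, map_zero]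
    have key : c (p + 1 + 1 + 1) / m (p + 1) - 2 * (c (p + 1) / m p)
        + L * (c (p + 1) / m (p + 1)) = 0 := by
      rw [hrec]
      field_simp [hm (p + 1)]
      ring
    have key' := congrArg (fun r : ℝ => (r : ℂ)) key
    push_cast at key' ⊢
    linear_combination key'

end

def evenTrunc (n : ℕ) (b : ℕ → ℝ) (p : ℕ) : ℝ :=
  if p % 2 = 0 ∧ p ≤ n then b (p / 2) else 0

section

variable {m : ℕ → ℝ} {L : ℝ} {b : ℕ → ℝ}

theorem eq_neg_mul_prod_of_hermite_coeff (hm : ∀ p, m p ≠ 0) (hb1 : b 1 = -L)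
    (hbk : ∀ k, 2 ≤ k → b k = -(m (2 * k) * L / m 2) *
      ∏ j ∈ Icc 1 (k - 1), (m (2 * j) * (2 * m (2 * j) / m (2 * j - 1) - L) / m (2 * j + 2)))
    {k : ℕ} (hk : 1 ≤ k) :
    b k = -L * ∏ j ∈ Icc 1 (k - 1), (2 * m (2 * j) / m (2 * j - 1) - L) := by
  obtain rfl | hk2 := hk.eq_or_lt
  · simp [hb1]
  have htel := prod_Icc_mul_div_succ (g := fun j => m (2 * j)) (fun j => hm _)
    (fun j => 2 * m (2 * j) / m (2 * j - 1) - L) (k - 1)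
  simp only [mul_add, mul_one, Nat.sub_add_cancel hk] at htel
  rw [hbk k hk2, htel]
  field_simp [hm 2, hm (2 * k)]

theorem succ_eq_mul_of_eq_neg_mul_prod
    (hb : ∀ k, 1 ≤ k →
      b k = -L * ∏ j ∈ Icc 1 (k - 1), (2 * m (2 * j) / m (2 * j - 1) - L))
    {k : ℕ} (hk : 1 ≤ k) :
    b (k + 1) = (2 * m (2 * k) / m (2 * k - 1) - L) * b k := by
  obtain ⟨j, rfl⟩ : ∃ j, k = j + 1 := ⟨k - 1, by omega⟩
  rw [hb _ (by omega), hb _ hk, Nat.add_sub_cancel, Nat.add_sub_cancel,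
    prod_Icc_succ_top (by omega)]
  ring

theorem evenTrunc_add_three {n : ℕ} (hn : n % 2 = 0)
    (hb : ∀ k, 1 ≤ k →
      b (k + 1) = (2 * m (2 * k) / m (2 * k - 1) - 2 * m n / m (n - 1)) * b k)
    (p : ℕ) :
    evenTrunc n b (p + 3) =
      (2 * m (p + 1) / m p - 2 * m n / m (n - 1)) * evenTrunc n b (p + 1) := by
  unfold evenTrunc
  by_cases hpar : (p + 1) % 2 = 0
  · rcases lt_trichotomy (p + 1) n with hlt | rfl | hgt
    · obtain ⟨k, hk⟩ : ∃ k, p + 1 = 2 * k := ⟨(p + 1) / 2, by omega⟩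
      rw [if_pos ⟨by omega, by omega⟩, if_pos ⟨hpar, hlt.le⟩,
        show (p + 3) / 2 = k + 1 by omega, show (p + 1) / 2 = k by omega, hb k (by omega), hk,
        show 2 * k - 1 = p by omega]
    · rw [if_neg (by omega), Nat.add_sub_cancel, sub_self, zero_mul]
    · rw [if_neg (by omega), if_neg (by omega), mul_zero]
  · rw [if_neg (by omega), if_neg (by omega), mul_zero]

end

theorem stmt6_general (m : ℕ → ℝ) (hm : ∀ p, 0 < m p)
    (n : ℕ) (hn : 2 ≤ n) (hev : Even n)
    (hne : ∀ j, 1 ≤ j → j ≤ n / 2 - 1 → 2 * m (2 * j) / m (2 * j - 1) ≠ 2 * m n / m (n - 1))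
    (b : ℕ → ℝ) (hb0 : b 0 = 1)
    (hb1 : b 1 = -(2 * m n / m (n - 1)))
    (hbk : ∀ k, 2 ≤ k → b k =
      -(m (2 * k) * (2 * m n / m (n - 1)) / m 2) *
        ∏ j ∈ Finset.Icc 1 (k - 1),
          (m (2 * j) * (2 * m (2 * j) / m (2 * j - 1) - 2 * m n / m (n - 1)) / m (2 * j + 2)))
    (y : PowerSeries ℂ)
    (hy : y = PowerSeries.mk fun p =>
      if p % 2 = 0 ∧ p ≤ n then ((b (p / 2) / m p : ℝ) : ℂ) else 0) :
    mderiv m (mderiv m y) - 2 * (X : PowerSeries ℂ) * mderiv m y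
        + C (R := ℂ) ((2 * m n / m (n - 1) : ℝ) : ℂ) * y = 0 ∧
    (∀ p, Odd p → PowerSeries.coeff (R := ℂ) p y = 0) ∧
    (∀ p, n < p → PowerSeries.coeff (R := ℂ) p y = 0) ∧
    PowerSeries.coeff (R := ℂ) n y ≠ 0 := by
  have hm' : ∀ p, m p ≠ 0 := fun p => (hm p).ne'
  have hn2 : n % 2 = 0 := Nat.even_iff.mp hev
  have hy' : y = ofMoments m (evenTrunc n b) := by
    ext p
    rw [hy, coeff_mk, coeff_ofMoments, evenTrunc]
    split_ifs <;> simp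
  have hclosed := fun k (hk : 1 ≤ k) => eq_neg_mul_prod_of_hermite_coeff hm' hb1 hbk hk
  have hcoeff : ∀ p, coeff p y = ((evenTrunc n b p / m p : ℝ) : ℂ) := by
    rw [hy']
    exact coeff_ofMoments _
  refine ⟨?_, fun p hp => ?_, fun p hp => ?_, ?_⟩
  · rw [hy']
    refine hermiteOp_ofMoments_eq_zero hm' ?_
      (evenTrunc_add_three hn2 fun k hk => succ_eq_mul_of_eq_neg_mul_prod hclosed hk)
    simp [evenTrunc, hn, hb0, hb1]
  · rw [hcoeff, evenTrunc, if_neg (by rw [Nat.odd_iff] at hp; omega)]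
    simp
  · rw [hcoeff, evenTrunc, if_neg (by omega)]
    simp
  · have hL : 2 * m n / m (n - 1) ≠ 0 := div_ne_zero (mul_ne_zero two_ne_zero (hm' n)) (hm' _)
    rw [hcoeff, evenTrunc, if_pos ⟨hn2, le_rfl⟩, hclosed _ (by omega)]
    refine Complex.ofReal_ne_zero.mpr (div_ne_zero (mul_ne_zero (neg_ne_zero.mpr hL) ?_) (hm' n))
    exact prod_ne_zero_iff.mpr fun j hj =>
      sub_ne_zero.mpr (hne j (mem_Icc.mp hj).1 (mem_Icc.mp hj).2)

/-- For even `n ≥ 2`, the even generalized Hermite polynomial of degree exactly `n`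
solves `∂_m² y - 2x ∂_m y + λ_n^H y = 0`, `λ_n^H = 2 m(n)/m(n-1)`. -/
theorem stmt6 (m : ℕ → ℝ) (hm : ∀ p, 0 < m p) (hm0 : m 0 = 1)
    (n : ℕ) (hn : 2 ≤ n) (hev : Even n)
    (hne : ∀ j, 1 ≤ j → j ≤ n / 2 - 1 → 2 * m (2 * j) / m (2 * j - 1) ≠ 2 * m n / m (n - 1))
    (b : ℕ → ℝ) (hb0 : b 0 = 1)
    (hb1 : b 1 = -(2 * m n / m (n - 1)))
    (hbk : ∀ k, 2 ≤ k → b k =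
      -(m (2 * k) * (2 * m n / m (n - 1)) / m 2) *
        ∏ j ∈ Finset.Icc 1 (k - 1),
          (m (2 * j) * (2 * m (2 * j) / m (2 * j - 1) - 2 * m n / m (n - 1)) / m (2 * j + 2)))
    (y : PowerSeries ℂ)
    (hy : y = PowerSeries.mk fun p =>
      if p % 2 = 0 ∧ p ≤ n then ((b (p / 2) / m p : ℝ) : ℂ) else 0) :
    mderiv m (mderiv m y) - 2 * (X : PowerSeries ℂ) * mderiv m y
        + C (R := ℂ) ((2 * m n / m (n - 1) : ℝ) : ℂ) * y = 0 ∧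
    (∀ p, Odd p → PowerSeries.coeff (R := ℂ) p y = 0) ∧
    (∀ p, n < p → PowerSeries.coeff (R := ℂ) p y = 0) ∧
    PowerSeries.coeff (R := ℂ) n y ≠ 0 :=
  stmt6_general m hm n hn hev hne b hb0 hb1 hbk y hy
end

section
/- Let q > 0, q ≠ 1, α > −1, n ≥ 1. The polynomial y(x) = ∑_{ν=0}^n a_ν x^ν with a_0 = 1, a_1 = −[n]_q/(α+1), and a_ν = −([n]_q/(α+1)) ∏_{j=1}^{ν−1} ( ([j]_q − [n]_q)/([j+1]_q([j]_q + α + 1)) ) for ν ≥ 2, satisfies the q-difference equation x D_{q,x}² y + (α+1−x) D_{q,x} y + [n]_q y = 0. -/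
open PowerSeries Finset

/-- The `q`-number `[j]_q = (1 - q^j)/(1 - q)`. -/
noncomputable def qnum (q : ℝ) (j : ℕ) : ℝ := (1 - q ^ j) / (1 - q)

/-- The Jackson `q`-derivative on formal power series, `D_q (x^p) = [p]_q x^{p-1}`. -/
noncomputable def qDeriv (q : ℝ) (f : PowerSeries ℂ) : PowerSeries ℂ :=
  PowerSeries.mk fun p => ((qnum q (p + 1) : ℝ) : ℂ) * PowerSeries.coeff (R := ℂ) (p + 1) f

/-!
Comparing coefficients of `x^p`, the equation says exactly that the coefficients `c_p` of `y`
satisfy `[p+1]_q ([p]_q + α + 1) c_{p+1} = ([p]_q - [n]_q) c_p`. The given coefficients are the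
partial products of the ratios `([j]_q - [n]_q) / ([j+1]_q ([j]_q + α + 1))`, whose denominators
are positive for `q > 0`, `α > -1`, so they satisfy this recurrence for `p < n`; truncating at
`n` keeps it, because the ratio at `j = n` vanishes.
-/

lemma qnum_zero (q : ℝ) : qnum q 0 = 0 := by
  simp [qnum]

lemma qnum_one {q : ℝ} (hq1 : q ≠ 1) : qnum q 1 = 1 := by
  rw [qnum, pow_one, div_self (sub_ne_zero.mpr hq1.symm)]

lemma qnum_eq_sum_range {q : ℝ} (hq1 : q ≠ 1) (j : ℕ) : qnum q j = ∑ i ∈ range j, q ^ i := by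
  rw [geom_sum_eq hq1, qnum, ← neg_div_neg_eq, neg_sub, neg_sub]

lemma qnum_nonneg {q : ℝ} (hq : 0 ≤ q) (hq1 : q ≠ 1) (j : ℕ) : 0 ≤ qnum q j := by
  rw [qnum_eq_sum_range hq1]
  positivity

lemma qnum_pos {q : ℝ} (hq : 0 < q) (hq1 : q ≠ 1) {j : ℕ} (hj : 0 < j) : 0 < qnum q j := by
  rw [qnum_eq_sum_range hq1]
  exact sum_pos (fun i _ => pow_pos hq i) (nonempty_range_iff.mpr hj.ne')

lemma coeff_qDeriv (q : ℝ) (f : PowerSeries ℂ) (p : ℕ) :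
    coeff p (qDeriv q f) = (qnum q (p + 1) : ℂ) * coeff (p + 1) f :=
  coeff_mk _ _

lemma coeff_X_mul_qDeriv (q : ℝ) (f : PowerSeries ℂ) (p : ℕ) :
    coeff p (X * qDeriv q f) = (qnum q p : ℂ) * coeff p f := by
  cases p with
  | zero => simp [qnum_zero]
  | succ p => rw [coeff_succ_X_mul, coeff_qDeriv]

lemma coeff_qLaguerre_operator (q : ℝ) (β μ : ℂ) (f : PowerSeries ℂ) (p : ℕ) :
    coeff p (X * qDeriv q (qDeriv q f) + (C β - X) * qDeriv q f + C μ * f) =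
      (qnum q (p + 1) : ℂ) * (qnum q p + β) * coeff (p + 1) f
        - ((qnum q p : ℂ) - μ) * coeff p f := by
  simp only [map_add, sub_mul, map_sub, coeff_C_mul, coeff_X_mul_qDeriv, coeff_qDeriv]
  ring

lemma mul_ite_succ_eq_mul_ite_of_eq_prod_range {K : Type*} [Field K] {u v a : ℕ → K} {n : ℕ}
    (hv : ∀ p < n, v p ≠ 0) (hu : u n = 0) (ha : ∀ ν ≤ n, a ν = ∏ j ∈ range ν, u j / v j)
    (p : ℕ) :
    v p * (if p + 1 ≤ n then a (p + 1) else 0) = u p * (if p ≤ n then a p else 0) := by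
  rcases lt_trichotomy p n with hpn | rfl | hnp
  · rw [if_pos (Nat.succ_le_of_lt hpn), if_pos hpn.le, ha _ hpn, ha _ hpn.le, prod_range_succ]
    field_simp [hv p hpn]
  · simp [hu]
  · simp [hnp.not_ge, (Nat.lt_succ_of_lt hnp).not_ge]

lemma eq_prod_range_of_eq_prod_Icc {q α : ℝ} {n : ℕ} {a : ℕ → ℝ} (hq1 : q ≠ 1) (ha0 : a 0 = 1)
    (ha1 : a 1 = -(qnum q n) / (α + 1))
    (hav : ∀ ν, 2 ≤ ν → ν ≤ n → a ν =
      -(qnum q n / (α + 1)) *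
        ∏ j ∈ Icc 1 (ν - 1), ((qnum q j - qnum q n) / (qnum q (j + 1) * (qnum q j + α + 1))))
    (ν : ℕ) (hν : ν ≤ n) :
    a ν = ∏ j ∈ range ν, (qnum q j - qnum q n) / (qnum q (j + 1) * (qnum q j + α + 1)) := by
  rcases ν with _ | m
  · simp [ha0]
  rw [range_eq_Ico, prod_eq_prod_Ico_succ_bot m.succ_pos, Nat.succ_eq_add_one, zero_add,
    Ico_add_one_right_eq_Icc, qnum_zero, qnum_one hq1, zero_sub, one_mul, zero_add, neg_div]
  rcases m with _ | m
  · simp [ha1, neg_div]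
  · exact hav (m + 2) (by omega) hν

theorem stmt15_general (q : ℝ) (hq : 0 < q) (hq1 : q ≠ 1) (α : ℝ) (hα : -1 < α)
    (n : ℕ)
    (a : ℕ → ℝ) (ha0 : a 0 = 1)
    (ha1 : a 1 = -(qnum q n) / (α + 1))
    (hav : ∀ ν, 2 ≤ ν → ν ≤ n → a ν =
      -(qnum q n / (α + 1)) *
        ∏ j ∈ Finset.Icc 1 (ν - 1),
          ((qnum q j - qnum q n) / (qnum q (j + 1) * (qnum q j + α + 1))))
    (y : PowerSeries ℂ)
    (hy : y = PowerSeries.mk fun ν => if ν ≤ n then ((a ν : ℝ) : ℂ) else 0) :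
    (X : PowerSeries ℂ) * qDeriv q (qDeriv q y)
      + (C (R := ℂ) ((α : ℂ) + 1) - X) * qDeriv q y
      + C (R := ℂ) ((qnum q n : ℝ) : ℂ) * y = 0 := by
  have hden (p : ℕ) : qnum q (p + 1) * (qnum q p + α + 1) ≠ 0 := by
    have := qnum_nonneg hq.le hq1 p
    exact mul_ne_zero (qnum_pos hq hq1 p.succ_pos).ne' (by linarith)
  have hrec := mul_ite_succ_eq_mul_ite_of_eq_prod_range (fun p _ => hden p) (sub_self _)
    (eq_prod_range_of_eq_prod_Icc hq1 ha0 ha1 hav)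
  have hcast (ν : ℕ) : (if ν ≤ n then ((a ν : ℝ) : ℂ) else 0) =
      ((if ν ≤ n then a ν else 0 : ℝ) : ℂ) := by
    split_ifs <;> simp
  ext p
  rw [coeff_qLaguerre_operator, hy, coeff_mk, coeff_mk, map_zero, hcast, hcast]
  have hrecC := congrArg ((↑) : ℝ → ℂ) (hrec p)
  simp only [Complex.ofReal_mul, Complex.ofReal_add, Complex.ofReal_sub, Complex.ofReal_one]
    at hrecC
  linear_combination hrecC

/-- The generalized `q`-Laguerre polynomial solves
`x D_q² y + (α+1-x) D_q y + [n]_q y = 0`. -/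
theorem stmt15 (q : ℝ) (hq : 0 < q) (hq1 : q ≠ 1) (α : ℝ) (hα : -1 < α)
    (n : ℕ) (hn : 1 ≤ n)
    (a : ℕ → ℝ) (ha0 : a 0 = 1)
    (ha1 : a 1 = -(qnum q n) / (α + 1))
    (hav : ∀ ν, 2 ≤ ν → ν ≤ n → a ν =
      -(qnum q n / (α + 1)) *
        ∏ j ∈ Finset.Icc 1 (ν - 1),
          ((qnum q j - qnum q n) / (qnum q (j + 1) * (qnum q j + α + 1))))
    (y : PowerSeries ℂ)
    (hy : y = PowerSeries.mk fun ν => if ν ≤ n then ((a ν : ℝ) : ℂ) else 0) :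
    (X : PowerSeries ℂ) * qDeriv q (qDeriv q y)
      + (C (R := ℂ) ((α : ℂ) + 1) - X) * qDeriv q y
      + C (R := ℂ) ((qnum q n : ℝ) : ℂ) * y = 0 :=
  stmt15_general q hq hq1 α hα n a ha0 ha1 hav y hy
end
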